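/- Let σ: ℝ → ℝ be Lipschitz and applied componentwise. Let 0 = t_0 < t_1 < ... < t_k = 1 be a partition of [0,1], and suppose θ1: [0,1] → ℝ^{d×d'}, b1: [0,1] → ℝ^d are continuous on each interval [t_{i-1}, t_i) and θ2: [0,1] → ℝ^{d'×d}, b2: [0,1] → ℝ^{d'} are continuously differentiable on each interval [t_{i-1}, t_i) (i = 1, ..., k), with one-sided limits at the breakpoints. Let φ(t, x) denote the (Carathéodory) flow of the single-hidden-layer vector field f(t, x) = θ1(t) σ(θ2(t) x + b2(t)) + b1(t), which exists and is unique on [0,1] for every x ∈ ℝ^d. Then there exist a hidden dimension D = k·d', piecewise-continuous parameters θ̃1: [0,1] → ℝ^{d×D}, θ̃2: [0,1] → ℝ^{D×d}, θ̃3: [0,1] → ℝ^{D×D}, b̃1: [0,1] → ℝ^d, b̃2: [0,1] → ℝ^{D}, and an affine map x ↦ Θ x + β (Θ ∈ ℝ^{D×d}, β ∈ ℝ^{D}) such that for every x ∈ ℝ^d the solution (q, v) of the UpDown model with these parameters and initial conditions q(0) = x, v(0) = Θ x + β satisfies q(t) = φ(t, x) for all t ∈ [0,1]. -/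

import Mathlib

/-!
The hidden state is the stack of pre-activations: block `i` is `θ₂⁽ⁱ⁾(τ) q(τ) + b₂⁽ⁱ⁾(τ)`, where
`θ₂⁽ⁱ⁾, b₂⁽ⁱ⁾` are the C¹ extensions of `θ₂, b₂` from `[tᵢ₋₁, tᵢ]`, frozen to constants outside
that interval, so that each block is continuous on `[0, 1]` and starts at an affine function of `x`.
On the active piece `p`, block `p` is exactly the pre-activation of the single-hidden-layer field,
so reading `θ₁` off that block reproduces `q̇`. Differentiating the hidden state gives
`v̇ = θ̇₂ q + θ₂ q̇ + ḃ₂`, and substituting `q̇ = θ̃₁ σ(v) + b₁` turns this into an UpDown equation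
with `θ̃₃ = θ₂ θ̃₁`. Hence `q = φ(·, x)` together with this `v` solves the UpDown model.
-/

open Set

/-- Matrix-vector product for matrices represented as functions. -/
def mvec {m n : ℕ} (A : Fin m → Fin n → ℝ) (x : Fin n → ℝ) : Fin m → ℝ :=
  fun i => ∑ j, A i j * x j

section MatrixVector

variable {m n p : ℕ}

lemma mvec_add_right (A : Fin m → Fin n → ℝ) (x y : Fin n → ℝ) :
    mvec A (x + y) = mvec A x + mvec A y :=
  Matrix.mulVec_add A x y

lemma mvec_mvec (A : Fin m → Fin n → ℝ) (B : Fin n → Fin p → ℝ) (x : Fin p → ℝ) :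
    mvec A (mvec B x) = mvec (fun i j => ∑ r, A i r * B r j) x :=
  Matrix.mulVec_mulVec x A B

lemma HasDerivWithinAt.mvec {A : ℝ → Fin m → Fin n → ℝ} {x : ℝ → Fin n → ℝ}
    {A' : Fin m → Fin n → ℝ} {x' : Fin n → ℝ} {s : Set ℝ} {τ : ℝ}
    (hA : HasDerivWithinAt A A' s τ) (hx : HasDerivWithinAt x x' s τ) :
    HasDerivWithinAt (fun τ => mvec (A τ) (x τ)) (mvec A' (x τ) + mvec (A τ) x') s τ := by
  refine hasDerivWithinAt_pi.2 fun i => ?_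
  have hAij j := hasDerivWithinAt_pi.1 (hasDerivWithinAt_pi.1 hA i) j
  have hxj j := hasDerivWithinAt_pi.1 hx j
  simpa only [_root_.mvec, Pi.add_apply, Finset.sum_add_distrib] using
    HasDerivWithinAt.fun_sum (u := Finset.univ) fun j _ => (hAij j).fun_mul (hxj j)

lemma hasDerivWithinAt_preactivation (σ : ℝ → ℝ) {q : ℝ → Fin n → ℝ}
    {W : ℝ → Fin m → Fin n → ℝ} {c : ℝ → Fin m → ℝ} {A : Fin n → Fin m → ℝ} {b : Fin n → ℝ}
    {W' : Fin m → Fin n → ℝ} {c' : Fin m → ℝ} {s : Set ℝ} {τ : ℝ}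
    (hq : HasDerivWithinAt q (mvec A (fun l => σ ((mvec (W τ) (q τ) + c τ) l)) + b) s τ)
    (hW : HasDerivWithinAt W W' s τ) (hc : HasDerivWithinAt c c' s τ) :
    HasDerivWithinAt (fun τ => mvec (W τ) (q τ) + c τ)
      (mvec W' (q τ) + (c' + mvec (W τ) b) +
        mvec (fun l l' => ∑ r, W τ l r * A r l') (fun l => σ ((mvec (W τ) (q τ) + c τ) l))) s τ :=
  ((hW.mvec hq).add hc).congr_deriv (by rw [mvec_add_right, mvec_mvec]; abel)

end MatrixVector

section Stack

variable {k d' : ℕ}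

def stackRows {α : Type*} (F : Fin k → Fin d' → α) : Fin (k * d') → α :=
  fun l => F (finProdFinEquiv.symm l).1 (finProdFinEquiv.symm l).2

lemma sum_stackRows {α : Type*} [AddCommMonoid α] (F : Fin k → Fin d' → α) :
    ∑ l, stackRows F l = ∑ i, ∑ c, F i c := by
  rw [← finProdFinEquiv.sum_comp, Fintype.sum_prod_type]
  simp only [stackRows, Equiv.symm_apply_apply]

lemma continuousOn_stackRows {α : Type*} [TopologicalSpace α] {F : Fin k → ℝ → Fin d' → α}
    {s : Set ℝ} (hF : ∀ i, ContinuousOn (F i) s) :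
    ContinuousOn (fun τ => stackRows fun i => F i τ) s :=
  continuousOn_pi.2 fun _ => continuousOn_pi.1 (hF _) _

variable {E : Type*} [NormedAddCommGroup E] [NormedSpace ℝ E]

lemma hasDerivWithinAt_stackRows {F : Fin k → ℝ → Fin d' → E} {F' : Fin k → Fin d' → E}
    {s : Set ℝ} {τ : ℝ} (hF : ∀ i, HasDerivWithinAt (F i) (F' i) s τ) :
    HasDerivWithinAt (fun τ => stackRows fun i => F i τ) (stackRows F') s τ :=
  hasDerivWithinAt_pi.2 fun _ => hasDerivWithinAt_pi.1 (hF _) _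

end Stack

section ExtendIcc

variable {E : Type*} {a b τ : ℝ} {g : ℝ → E}

def extendIcc (a b : ℝ) (g : ℝ → E) (τ : ℝ) : E := g (max a (min τ b))

lemma extendIcc_of_mem (hτ : τ ∈ Icc a b) : extendIcc a b g τ = g τ := by
  rw [extendIcc, min_eq_left hτ.2, max_eq_right hτ.1]

lemma extendIcc_of_le_left (hτ : τ ≤ a) : extendIcc a b g τ = g a := by
  rw [extendIcc, max_eq_left ((min_le_left _ _).trans hτ)]

lemma extendIcc_of_right_le (hab : a ≤ b) (hτ : b ≤ τ) : extendIcc a b g τ = g b := by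
  rw [extendIcc, min_eq_right hτ, max_eq_right hab]

lemma continuous_extendIcc [TopologicalSpace E] (hab : a ≤ b) (hg : ContinuousOn g (Icc a b)) :
    Continuous (extendIcc a b g) :=
  hg.comp_continuous (by fun_prop) fun _ => ⟨le_max_left _ _, max_le hab (min_le_right _ _)⟩

variable [NormedAddCommGroup E] [NormedSpace ℝ E]

lemma hasDerivWithinAt_extendIcc_of_mem (hg : DifferentiableWithinAt ℝ g (Icc a b) τ)
    (hτ : τ ∈ Ico a b) :
    HasDerivWithinAt (extendIcc a b g) (derivWithin g (Icc a b) τ) (Ico a b) τ :=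
  (hg.hasDerivWithinAt.mono Ico_subset_Icc_self).congr
    (fun _ hs => extendIcc_of_mem (Ico_subset_Icc_self hs))
    (extendIcc_of_mem (Ico_subset_Icc_self hτ))

lemma hasDerivWithinAt_extendIcc_of_subset_Iic {s : Set ℝ} (hs : s ⊆ Iic a) (hτ : τ ∈ s) :
    HasDerivWithinAt (extendIcc a b g) 0 s τ :=
  (hasDerivWithinAt_const τ s (g a)).congr (fun _ hu => extendIcc_of_le_left (hs hu))
    (extendIcc_of_le_left (hs hτ))

lemma hasDerivWithinAt_extendIcc_of_subset_Ici {s : Set ℝ} (hab : a ≤ b) (hs : s ⊆ Ici b)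
    (hτ : τ ∈ s) : HasDerivWithinAt (extendIcc a b g) 0 s τ :=
  (hasDerivWithinAt_const τ s (g b)).congr (fun _ hu => extendIcc_of_right_le hab (hs hu))
    (extendIcc_of_right_le hab (hs hτ))

end ExtendIcc

section Partition

variable {k : ℕ} {t : Fin (k + 1) → ℝ} {i p : Fin k}

lemma Monotone.Ico_subset_Ici_of_lt (ht : Monotone t) (h : i < p) :
    Ico (t p.castSucc) (t p.succ) ⊆ Ici (t i.succ) :=
  fun _ hτ => (ht (Fin.succ_le_castSucc_iff.2 h)).trans hτ.1

lemma Monotone.Ico_subset_Iio_of_lt (ht : Monotone t) (h : p < i) :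
    Ico (t p.castSucc) (t p.succ) ⊆ Iio (t i.castSucc) :=
  fun _ hτ => hτ.2.trans_le (ht (Fin.succ_le_castSucc_iff.2 h))

lemma Monotone.notMem_Ico_of_ne (ht : Monotone t) {τ : ℝ} (hτ : τ ∈ Ico (t p.castSucc) (t p.succ))
    (h : i ≠ p) : τ ∉ Ico (t i.castSucc) (t i.succ) := fun hτi =>
  h.lt_or_gt.elim (fun hip => (ht.Ico_subset_Ici_of_lt hip hτ).not_gt hτi.2)
    (fun hpi => (ht.Ico_subset_Iio_of_lt hpi hτ).not_ge hτi.1)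

end Partition

section Construction

variable {d d' k : ℕ} {t : Fin (k + 1) → ℝ} {p : Fin k} {τ : ℝ}

lemma Monotone.continuousOn_indicator_Ico {β : Type*} [Zero β] [TopologicalSpace β]
    (ht : Monotone t) {i : Fin k} {f : ℝ → β}
    (hf : ContinuousOn f (Ico (t i.castSucc) (t i.succ))) :
    ContinuousOn ((Ico (t i.castSucc) (t i.succ)).indicator f) (Ico (t p.castSucc) (t p.succ)) := by
  by_cases hip : i = p
  · subst hip
    exact hf.congr fun _ hτ => indicator_of_mem hτ f
  · exact continuousOn_const.congr fun _ hτ => indicator_of_notMem (ht.notMem_Ico_of_ne hτ hip) f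

lemma Monotone.hasDerivWithinAt_extendIcc {E : Type*} [NormedAddCommGroup E] [NormedSpace ℝ E]
    (ht : Monotone t) {i : Fin k} {g : ℝ → E}
    (hg : DifferentiableOn ℝ g (Icc (t i.castSucc) (t i.succ)))
    (hτ : τ ∈ Ico (t p.castSucc) (t p.succ)) :
    HasDerivWithinAt (extendIcc (t i.castSucc) (t i.succ) g)
      ((Ico (t i.castSucc) (t i.succ)).indicator (derivWithin g (Icc (t i.castSucc) (t i.succ))) τ)
      (Ico (t p.castSucc) (t p.succ)) τ := by
  rcases lt_trichotomy i p with hip | rfl | hpi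
  · rw [indicator_of_notMem (ht.notMem_Ico_of_ne hτ hip.ne)]
    exact hasDerivWithinAt_extendIcc_of_subset_Ici (ht (Fin.castSucc_le_succ i))
      (ht.Ico_subset_Ici_of_lt hip) hτ
  · rw [indicator_of_mem hτ]
    exact hasDerivWithinAt_extendIcc_of_mem (hg τ (Ico_subset_Icc_self hτ)) hτ
  · rw [indicator_of_notMem (ht.notMem_Ico_of_ne hτ hpi.ne')]
    exact hasDerivWithinAt_extendIcc_of_subset_Iic
      ((ht.Ico_subset_Iio_of_lt hpi).trans Iio_subset_Iic_self) hτ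

def frozenStack {α : Type*} (t : Fin (k + 1) → ℝ) (g : Fin k → ℝ → Fin d' → α) (τ : ℝ) :
    Fin (k * d') → α :=
  stackRows fun i => extendIcc (t i.castSucc) (t i.succ) (g i) τ

noncomputable def frozenStackDeriv {E : Type*} [NormedAddCommGroup E] [NormedSpace ℝ E]
    (t : Fin (k + 1) → ℝ) (g : Fin k → ℝ → Fin d' → E) (τ : ℝ) : Fin (k * d') → E :=
  stackRows fun i =>
    (Ico (t i.castSucc) (t i.succ)).indicator (derivWithin (g i) (Icc (t i.castSucc) (t i.succ))) τ

noncomputable def blockSelect (t : Fin (k + 1) → ℝ) (θ : ℝ → Fin d → Fin d' → ℝ) (τ : ℝ) :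
    Fin d → Fin (k * d') → ℝ :=
  fun r => stackRows fun i => (Ico (t i.castSucc) (t i.succ)).indicator θ τ r

lemma continuous_frozenStack {α : Type*} [TopologicalSpace α] (ht : Monotone t)
    {g : Fin k → ℝ → Fin d' → α} (hg : ∀ i, ContinuousOn (g i) (Icc (t i.castSucc) (t i.succ))) :
    Continuous (frozenStack t g) :=
  continuousOn_univ.1 <| continuousOn_stackRows fun i =>
    (continuous_extendIcc (ht (Fin.castSucc_le_succ i)) (hg i)).continuousOn

lemma StrictMono.continuousOn_frozenStackDeriv {E : Type*} [NormedAddCommGroup E]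
    [NormedSpace ℝ E] (ht : StrictMono t) {g : Fin k → ℝ → Fin d' → E}
    (hg : ∀ i, ContDiffOn ℝ 1 (g i) (Icc (t i.castSucc) (t i.succ))) :
    ContinuousOn (frozenStackDeriv t g) (Ico (t p.castSucc) (t p.succ)) :=
  continuousOn_stackRows fun i => ht.monotone.continuousOn_indicator_Ico <|
    ((hg i).continuousOn_derivWithin (uniqueDiffOn_Icc (ht Fin.castSucc_lt_succ)) le_rfl).mono
      Ico_subset_Icc_self

lemma Monotone.hasDerivWithinAt_frozenStack {E : Type*} [NormedAddCommGroup E] [NormedSpace ℝ E]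
    (ht : Monotone t) {g : Fin k → ℝ → Fin d' → E}
    (hg : ∀ i, DifferentiableOn ℝ (g i) (Icc (t i.castSucc) (t i.succ)))
    (hτ : τ ∈ Ico (t p.castSucc) (t p.succ)) :
    HasDerivWithinAt (frozenStack t g) (frozenStackDeriv t g τ) (Ico (t p.castSucc) (t p.succ)) τ :=
  hasDerivWithinAt_stackRows fun i => ht.hasDerivWithinAt_extendIcc (hg i) hτ

lemma Monotone.continuousOn_blockSelect (ht : Monotone t) {θ : ℝ → Fin d → Fin d' → ℝ}
    (hθ : ∀ i : Fin k, ContinuousOn θ (Ico (t i.castSucc) (t i.succ))) :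
    ContinuousOn (blockSelect t θ) (Ico (t p.castSucc) (t p.succ)) :=
  continuousOn_pi.2 fun r => continuousOn_stackRows fun i =>
    continuousOn_pi.1 (ht.continuousOn_indicator_Ico (hθ i)) r

lemma Monotone.mvec_blockSelect (ht : Monotone t) (θ : ℝ → Fin d → Fin d' → ℝ)
    (hτ : τ ∈ Ico (t p.castSucc) (t p.succ)) (u : Fin k → Fin d' → ℝ) :
    mvec (blockSelect t θ τ) (stackRows u) = mvec (θ τ) (u p) := by
  funext r
  change ∑ l, stackRows (fun i c => (Ico (t i.castSucc) (t i.succ)).indicator θ τ r c * u i c) l = _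
  rw [sum_stackRows, Finset.sum_eq_single p (fun i _ hip => ?_) (by simp)]
  · simp [mvec, indicator_of_mem hτ]
  · simp [indicator_of_notMem (ht.notMem_Ico_of_ne hτ hip)]

lemma Monotone.mvec_blockSelect_frozenStack (ht : Monotone t) (σ : ℝ → ℝ)
    {θ1 : ℝ → Fin d → Fin d' → ℝ} {θ2 : ℝ → Fin d' → Fin d → ℝ} {b2 : ℝ → Fin d' → ℝ}
    {g2 : Fin k → ℝ → Fin d' → Fin d → ℝ} {gb2 : Fin k → ℝ → Fin d' → ℝ}
    (hθ2 : EqOn θ2 (g2 p) (Ico (t p.castSucc) (t p.succ)))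
    (hb2 : EqOn b2 (gb2 p) (Ico (t p.castSucc) (t p.succ)))
    (hτ : τ ∈ Ico (t p.castSucc) (t p.succ)) (x : Fin d → ℝ) :
    mvec (blockSelect t θ1 τ) (fun l => σ ((mvec (frozenStack t g2 τ) x + frozenStack t gb2 τ) l)) =
      mvec (θ1 τ) (fun c => σ ((mvec (θ2 τ) x + b2 τ) c)) := by
  refine (ht.mvec_blockSelect θ1 hτ fun i c =>
    σ ((mvec (extendIcc (t i.castSucc) (t i.succ) (g2 i) τ) x +
      extendIcc (t i.castSucc) (t i.succ) (gb2 i) τ) c)).trans ?_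
  rw [extendIcc_of_mem (Ico_subset_Icc_self hτ), extendIcc_of_mem (Ico_subset_Icc_self hτ),
    ← hθ2 hτ, ← hb2 hτ]

end Construction

theorem single_hidden_layer_flow_realized_by_updown_general
    (d d' k : ℕ)
    (σ : ℝ → ℝ)
    -- partition 0 = t₀ < t₁ < … < t_k = 1
    (t : Fin (k+1) → ℝ) (ht0 : t 0 = 0) (ht1 : t (Fin.last k) = 1)
    (htmono : StrictMono t)
    (θ1 : ℝ → Fin d → Fin d' → ℝ) (b1 : ℝ → Fin d → ℝ)
    (θ2 : ℝ → Fin d' → Fin d → ℝ) (b2 : ℝ → Fin d' → ℝ)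
    -- θ1, b1 continuous on each [tᵢ₋₁, tᵢ) with one-sided limits at the breakpoints
    (hθ1 : ∀ i : Fin k, ∃ g : ℝ → Fin d → Fin d' → ℝ,
      ContinuousOn g (Icc (t i.castSucc) (t i.succ)) ∧
      EqOn θ1 g (Ico (t i.castSucc) (t i.succ)))
    (hb1 : ∀ i : Fin k, ∃ g : ℝ → Fin d → ℝ,
      ContinuousOn g (Icc (t i.castSucc) (t i.succ)) ∧
      EqOn b1 g (Ico (t i.castSucc) (t i.succ)))
    -- θ2, b2 continuously differentiable on each [tᵢ₋₁, tᵢ) with one-sided limits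
    (hθ2 : ∀ i : Fin k, ∃ g : ℝ → Fin d' → Fin d → ℝ,
      ContDiffOn ℝ 1 g (Icc (t i.castSucc) (t i.succ)) ∧
      EqOn θ2 g (Ico (t i.castSucc) (t i.succ)))
    (hb2 : ∀ i : Fin k, ∃ g : ℝ → Fin d' → ℝ,
      ContDiffOn ℝ 1 g (Icc (t i.castSucc) (t i.succ)) ∧
      EqOn b2 g (Ico (t i.castSucc) (t i.succ)))
    -- φ is the flow of the single-hidden-layer vector field
    (φ : (Fin d → ℝ) → ℝ → Fin d → ℝ)
    (hφ0 : ∀ x, φ x 0 = x)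
    (hφcont : ∀ x, ContinuousOn (φ x) (Icc 0 1))
    (hφode : ∀ x, ∀ i : Fin k, ∀ s ∈ Ico (t i.castSucc) (t i.succ),
      HasDerivWithinAt (φ x)
        (mvec (θ1 s) (fun l => σ ((mvec (θ2 s) (φ x s) + b2 s) l)) + b1 s)
        (Ico (t i.castSucc) (t i.succ)) s) :
    -- there is an UpDown model with hidden dimension k·d' realizing the flow
    ∃ (m : ℕ) (s : Fin (m+1) → ℝ), s 0 = 0 ∧ s (Fin.last m) = 1 ∧ StrictMono s ∧
    ∃ (θt1 : ℝ → Fin d → Fin (k * d') → ℝ) (θt2 : ℝ → Fin (k * d') → Fin d → ℝ)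
      (θt3 : ℝ → Fin (k * d') → Fin (k * d') → ℝ)
      (bt1 : ℝ → Fin d → ℝ) (bt2 : ℝ → Fin (k * d') → ℝ)
      (Θ : Fin (k * d') → Fin d → ℝ) (β : Fin (k * d') → ℝ),
      -- the UpDown parameters are piecewise continuous
      (∀ i : Fin m,
        ContinuousOn θt1 (Ico (s i.castSucc) (s i.succ)) ∧
        ContinuousOn θt2 (Ico (s i.castSucc) (s i.succ)) ∧
        ContinuousOn θt3 (Ico (s i.castSucc) (s i.succ)) ∧
        ContinuousOn bt1 (Ico (s i.castSucc) (s i.succ)) ∧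
        ContinuousOn bt2 (Ico (s i.castSucc) (s i.succ))) ∧
      -- for every initial value the UpDown solution reproduces the flow
      ∀ x : Fin d → ℝ, ∃ (q : ℝ → Fin d → ℝ) (v : ℝ → Fin (k * d') → ℝ),
        q 0 = x ∧ v 0 = mvec Θ x + β ∧
        ContinuousOn q (Icc 0 1) ∧ ContinuousOn v (Icc 0 1) ∧
        (∀ i : Fin m, ∀ τ ∈ Ico (s i.castSucc) (s i.succ),
          HasDerivWithinAt q (mvec (θt1 τ) (fun l => σ (v τ l)) + bt1 τ)
            (Ico (s i.castSucc) (s i.succ)) τ ∧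
          HasDerivWithinAt v
            (mvec (θt2 τ) (q τ) + bt2 τ + mvec (θt3 τ) (fun l => σ (v τ l)))
            (Ico (s i.castSucc) (s i.succ)) τ) ∧
        ∀ τ ∈ Icc (0:ℝ) 1, q τ = φ x τ := by
  choose g1 hg1 hθ1g using hθ1
  choose gb1 hgb1 hb1g using hb1
  choose g2 hg2 hθ2g using hθ2
  choose gb2 hgb2 hb2g using hb2
  have ht := htmono.monotone
  have hθ1c (i : Fin k) : ContinuousOn θ1 (Ico (t i.castSucc) (t i.succ)) :=
    ((hg1 i).mono Ico_subset_Icc_self).congr (hθ1g i)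
  have hb1c (i : Fin k) : ContinuousOn b1 (Ico (t i.castSucc) (t i.succ)) :=
    ((hgb1 i).mono Ico_subset_Icc_self).congr (hb1g i)
  have hW := continuous_frozenStack ht fun i => (hg2 i).continuousOn
  have hc := continuous_frozenStack ht fun i => (hgb2 i).continuousOn
  have hg2d i := (hg2 i).differentiableOn one_ne_zero
  have hgb2d i := (hgb2 i).differentiableOn one_ne_zero
  refine ⟨k, t, ht0, ht1, htmono, blockSelect t θ1, frozenStackDeriv t g2,
    fun τ l l' => ∑ r, frozenStack t g2 τ l r * blockSelect t θ1 τ r l', b1,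
    fun τ => frozenStackDeriv t gb2 τ + mvec (frozenStack t g2 τ) (b1 τ),
    frozenStack t g2 0, frozenStack t gb2 0, fun p => ?_, fun x => ?_⟩
  · have hsel := ht.continuousOn_blockSelect hθ1c (p := p)
    have hc' := htmono.continuousOn_frozenStackDeriv hgb2 (p := p)
    refine ⟨hsel, htmono.continuousOn_frozenStackDeriv hg2, ?_, hb1c p, ?_⟩
    · fun_prop
    · have hb1p := hb1c p
      unfold mvec
      fun_prop
  refine ⟨φ x, fun τ => mvec (frozenStack t g2 τ) (φ x τ) + frozenStack t gb2 τ, hφ0 x,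
    by simp only [hφ0], hφcont x, by unfold mvec; fun_prop, fun p τ hτ => ?_, fun _ _ => rfl⟩
  have hq := hφode x p τ hτ
  rw [← ht.mvec_blockSelect_frozenStack σ (hθ2g p) (hb2g p) hτ] at hq
  exact ⟨hq, hasDerivWithinAt_preactivation σ hq (ht.hasDerivWithinAt_frozenStack hg2d hτ)
    (ht.hasDerivWithinAt_frozenStack hgb2d hτ)⟩

/-- The flow of a single-hidden-layer vector field with piecewise regular (continuous
resp. C¹, with one-sided limits at the breakpoints) time-dependent parameters can be
realized exactly by an `UpDown` model with hidden dimension `D = k·d'`,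
piecewise-continuous parameters, and an affine map initializing the hidden state. -/
theorem single_hidden_layer_flow_realized_by_updown
    (d d' k : ℕ) (hk : 0 < k)
    (σ : ℝ → ℝ) (Kσ : NNReal) (hσ : LipschitzWith Kσ σ)
    -- partition 0 = t₀ < t₁ < … < t_k = 1
    (t : Fin (k+1) → ℝ) (ht0 : t 0 = 0) (ht1 : t (Fin.last k) = 1)
    (htmono : StrictMono t)
    (θ1 : ℝ → Fin d → Fin d' → ℝ) (b1 : ℝ → Fin d → ℝ)
    (θ2 : ℝ → Fin d' → Fin d → ℝ) (b2 : ℝ → Fin d' → ℝ)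
    -- θ1, b1 continuous on each [tᵢ₋₁, tᵢ) with one-sided limits at the breakpoints
    (hθ1 : ∀ i : Fin k, ∃ g : ℝ → Fin d → Fin d' → ℝ,
      ContinuousOn g (Icc (t i.castSucc) (t i.succ)) ∧
      EqOn θ1 g (Ico (t i.castSucc) (t i.succ)))
    (hb1 : ∀ i : Fin k, ∃ g : ℝ → Fin d → ℝ,
      ContinuousOn g (Icc (t i.castSucc) (t i.succ)) ∧
      EqOn b1 g (Ico (t i.castSucc) (t i.succ)))
    -- θ2, b2 continuously differentiable on each [tᵢ₋₁, tᵢ) with one-sided limits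
    (hθ2 : ∀ i : Fin k, ∃ g : ℝ → Fin d' → Fin d → ℝ,
      ContDiffOn ℝ 1 g (Icc (t i.castSucc) (t i.succ)) ∧
      EqOn θ2 g (Ico (t i.castSucc) (t i.succ)))
    (hb2 : ∀ i : Fin k, ∃ g : ℝ → Fin d' → ℝ,
      ContDiffOn ℝ 1 g (Icc (t i.castSucc) (t i.succ)) ∧
      EqOn b2 g (Ico (t i.castSucc) (t i.succ)))
    -- φ is the flow of the single-hidden-layer vector field
    (φ : (Fin d → ℝ) → ℝ → Fin d → ℝ)
    (hφ0 : ∀ x, φ x 0 = x)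
    (hφcont : ∀ x, ContinuousOn (φ x) (Icc 0 1))
    (hφode : ∀ x, ∀ i : Fin k, ∀ s ∈ Ico (t i.castSucc) (t i.succ),
      HasDerivWithinAt (φ x)
        (mvec (θ1 s) (fun l => σ ((mvec (θ2 s) (φ x s) + b2 s) l)) + b1 s)
        (Ico (t i.castSucc) (t i.succ)) s)
    -- the flow is unique
    (hφuniq : ∀ x, ∀ ψ : ℝ → Fin d → ℝ, ψ 0 = x → ContinuousOn ψ (Icc 0 1) →
      (∀ i : Fin k, ∀ s ∈ Ico (t i.castSucc) (t i.succ),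
        HasDerivWithinAt ψ
          (mvec (θ1 s) (fun l => σ ((mvec (θ2 s) (ψ s) + b2 s) l)) + b1 s)
          (Ico (t i.castSucc) (t i.succ)) s) →
      EqOn ψ (φ x) (Icc 0 1)) :
    -- there is an UpDown model with hidden dimension k·d' realizing the flow
    ∃ (m : ℕ) (s : Fin (m+1) → ℝ), s 0 = 0 ∧ s (Fin.last m) = 1 ∧ StrictMono s ∧
    ∃ (θt1 : ℝ → Fin d → Fin (k * d') → ℝ) (θt2 : ℝ → Fin (k * d') → Fin d → ℝ)
      (θt3 : ℝ → Fin (k * d') → Fin (k * d') → ℝ)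
      (bt1 : ℝ → Fin d → ℝ) (bt2 : ℝ → Fin (k * d') → ℝ)
      (Θ : Fin (k * d') → Fin d → ℝ) (β : Fin (k * d') → ℝ),
      -- the UpDown parameters are piecewise continuous
      (∀ i : Fin m,
        ContinuousOn θt1 (Ico (s i.castSucc) (s i.succ)) ∧
        ContinuousOn θt2 (Ico (s i.castSucc) (s i.succ)) ∧
        ContinuousOn θt3 (Ico (s i.castSucc) (s i.succ)) ∧
        ContinuousOn bt1 (Ico (s i.castSucc) (s i.succ)) ∧
        ContinuousOn bt2 (Ico (s i.castSucc) (s i.succ))) ∧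
      -- for every initial value the UpDown solution reproduces the flow
      ∀ x : Fin d → ℝ, ∃ (q : ℝ → Fin d → ℝ) (v : ℝ → Fin (k * d') → ℝ),
        q 0 = x ∧ v 0 = mvec Θ x + β ∧
        ContinuousOn q (Icc 0 1) ∧ ContinuousOn v (Icc 0 1) ∧
        (∀ i : Fin m, ∀ τ ∈ Ico (s i.castSucc) (s i.succ),
          HasDerivWithinAt q (mvec (θt1 τ) (fun l => σ (v τ l)) + bt1 τ)
            (Ico (s i.castSucc) (s i.succ)) τ ∧
          HasDerivWithinAt v
            (mvec (θt2 τ) (q τ) + bt2 τ + mvec (θt3 τ) (fun l => σ (v τ l)))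
            (Ico (s i.castSucc) (s i.succ)) τ) ∧
        ∀ τ ∈ Icc (0:ℝ) 1, q τ = φ x τ :=
  single_hidden_layer_flow_realized_by_updown_general d d' k σ t ht0 ht1 htmono θ1 b1 θ2 b2 hθ1 hb1
    hθ2 hb2 φ hφ0 hφcont hφode
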